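/- If β(γ) = sqrt(γ/(γ+1)) and the hard-decision bound is P(γ) = ∑_{q=t+1}^{n} C(n,q)((1−β)/2)^q ((1+β)/2)^{n−q}, then for fixed n and t < n, lim_{γ→∞} (−log P(γ))/log γ = t+1. -/

import Mathlib

/-! Write `P = a ^ (t + 1) * S` with `a = (1 - β) / 2` and
`S = ∑ C(n, q) a ^ (q - t - 1) b ^ (n - q)`, `b = (1 + β) / 2`; as `γ → ∞`, `β → 1`, so
`S → C(n, t + 1) > 0` and `log S` is negligible against `log γ`. Since `1 - β² = 1 / (γ + 1)`,
`1 / a = 2 (1 + β) (γ + 1) ~ 4 γ`, hence `-log a / log γ → 1` and `-log P / log γ → t + 1`. -/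

open Real Filter Finset Topology

theorem Finset.sum_Icc_choose_mul_pow_eq_pow_mul {R : Type*} [CommSemiring R] (m n : ℕ) (a b : R) :
    ∑ q ∈ Icc m n, (n.choose q : R) * a ^ q * b ^ (n - q) =
      a ^ m * ∑ q ∈ Icc m n, (n.choose q : R) * a ^ (q - m) * b ^ (n - q) := by
  rw [mul_sum]
  refine sum_congr rfl fun q hq => ?_
  rw [← Nat.add_sub_of_le (mem_Icc.mp hq).1, pow_add, Nat.add_sub_cancel_left]
  ring

theorem tendsto_sum_Icc_choose_mul_pow {α R : Type*} [CommSemiring R] [TopologicalSpace R]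
    [IsTopologicalSemiring R] {l : Filter α} {a b : α → R}
    (ha : Tendsto a l (𝓝 0)) (hb : Tendsto b l (𝓝 1)) {m n : ℕ} (hmn : m ≤ n) :
    Tendsto (fun x => ∑ q ∈ Icc m n, (n.choose q : R) * a x ^ (q - m) * b x ^ (n - q)) l
      (𝓝 (n.choose m)) := by
  have hlim : ∑ q ∈ Icc m n, (n.choose q : R) * 0 ^ (q - m) * 1 ^ (n - q) = n.choose m := by
    rw [sum_eq_single_of_mem m (mem_Icc.mpr ⟨le_rfl, hmn⟩)]
    · simp
    · intro q hq hqm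
      have := (mem_Icc.mp hq).1
      rw [zero_pow (by omega), mul_zero, zero_mul]
  rw [← hlim]
  exact tendsto_finsetSum _ fun q _ => (tendsto_const_nhds.mul (ha.pow _)).mul (hb.pow _)

theorem tendsto_sqrt_div_add_one : Tendsto (fun x : ℝ => √(x / (x + 1))) atTop (𝓝 1) := by
  have h : Tendsto (fun x : ℝ => 1 - (x + 1)⁻¹) atTop (𝓝 1) := by
    simpa using
      (tendsto_atTop_add_const_right atTop (1 : ℝ) tendsto_id).inv_tendsto_atTop.const_sub 1
  have h' : Tendsto (fun x : ℝ => x / (x + 1)) atTop (𝓝 1) := by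
    refine h.congr' ?_
    filter_upwards [eventually_gt_atTop 0] with x hx
    field_simp
    ring
  simpa using h'.sqrt

theorem one_sub_sqrt_div_add_one_mul {x : ℝ} (hx : 0 ≤ x) :
    (1 - √(x / (x + 1))) * (1 + √(x / (x + 1))) * (x + 1) = 1 := by
  have hsq : √(x / (x + 1)) ^ 2 = x / (x + 1) := sq_sqrt (by positivity)
  calc (1 - √(x / (x + 1))) * (1 + √(x / (x + 1))) * (x + 1)
      = (1 - √(x / (x + 1)) ^ 2) * (x + 1) := by ring
    _ = 1 := by rw [hsq]; field_simp; ring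

theorem tendsto_log_mul_div_log {g : ℝ → ℝ} {c : ℝ} (hg : Tendsto g atTop (𝓝 c)) (hc : c ≠ 0) :
    Tendsto (fun x => log (x * g x) / log x) atTop (𝓝 1) := by
  have hlog : Tendsto (fun x => 1 + log (g x) / log x) atTop (𝓝 1) := by
    simpa using ((hg.log hc).div_atTop tendsto_log_atTop).const_add 1
  refine hlog.congr' ?_
  filter_upwards [eventually_gt_atTop 1, hg.eventually_ne hc] with x hx hgx
  rw [log_mul (by linarith) hgx, add_div, div_self (log_pos hx).ne']

theorem tendsto_neg_log_one_sub_sqrt_div_two_div_log :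
    Tendsto (fun x => -log ((1 - √(x / (x + 1))) / 2) / log x) atTop (𝓝 1) := by
  have hg : Tendsto (fun x : ℝ => 2 * (1 + √(x / (x + 1))) * (1 + x⁻¹)) atTop (𝓝 4) := by
    have := ((tendsto_sqrt_div_add_one.const_add 1).const_mul 2).mul
      (tendsto_inv_atTop_zero.const_add 1)
    norm_num at this
    exact this
  refine (tendsto_log_mul_div_log hg (by norm_num)).congr' ?_
  filter_upwards [eventually_gt_atTop 0] with x hx
  rw [← log_inv]
  congr 2
  refine eq_inv_of_mul_eq_one_left ?_
  field_simp
  linear_combination one_sub_sqrt_div_add_one_mul hx.le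

theorem tendsto_neg_log_pow_mul_div_log {a S : ℝ → ℝ} {d c : ℝ} (k : ℕ)
    (ha : Tendsto (fun x => -log (a x) / log x) atTop (𝓝 d)) (ha0 : ∀ᶠ x in atTop, a x ≠ 0)
    (hS : Tendsto S atTop (𝓝 c)) (hc : c ≠ 0) :
    Tendsto (fun x => -log (a x ^ k * S x) / log x) atTop (𝓝 (k * d)) := by
  have hlim : Tendsto (fun x => k * (-log (a x) / log x) - log (S x) / log x) atTop
      (𝓝 (k * d)) := by
    simpa using (ha.const_mul (k : ℝ)).sub ((hS.log hc).div_atTop tendsto_log_atTop)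
  refine hlim.congr' ?_
  filter_upwards [ha0, hS.eventually_ne hc] with x hax hSx
  rw [log_mul (pow_ne_zero k hax) hSx, log_pow]
  ring

theorem hard_decision_diversity (n t : ℕ) (ht : t < n) :
    Tendsto (fun γ : ℝ =>
        -Real.log (∑ q ∈ Finset.Icc (t + 1) n,
            (n.choose q : ℝ) * ((1 - Real.sqrt (γ / (γ + 1))) / 2) ^ q
              * ((1 + Real.sqrt (γ / (γ + 1))) / 2) ^ (n - q)) / Real.log γ)
      atTop (nhds (t + 1)) := by
  have hβ := tendsto_sqrt_div_add_one
  have ha : Tendsto (fun γ : ℝ => (1 - √(γ / (γ + 1))) / 2) atTop (𝓝 0) := by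
    simpa using (hβ.const_sub 1).div_const 2
  have hb : Tendsto (fun γ : ℝ => (1 + √(γ / (γ + 1))) / 2) atTop (𝓝 1) := by
    have := (hβ.const_add 1).div_const 2
    norm_num at this
    exact this
  have ha0 : ∀ᶠ γ : ℝ in atTop, (1 - √(γ / (γ + 1))) / 2 ≠ 0 := by
    filter_upwards [eventually_gt_atTop 0] with γ hγ
    exact div_ne_zero (left_ne_zero_of_mul
      (left_ne_zero_of_mul_eq_one (one_sub_sqrt_div_add_one_mul hγ.le))) two_ne_zero
  simp only [sum_Icc_choose_mul_pow_eq_pow_mul]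
  simpa using tendsto_neg_log_pow_mul_div_log (t + 1)
    tendsto_neg_log_one_sub_sqrt_div_two_div_log ha0
    (tendsto_sum_Icc_choose_mul_pow ha hb ht) (Nat.cast_ne_zero.mpr (Nat.choose_pos ht).ne')
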